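/- Let p, q > 0 and let φ = (φ_1,…,φ_n) be a holomorphic self-map of U^n. The composition operator C_φ maps B^p(U^n) boundedly into B^q(U^n) (i.e., f∘φ ∈ B^q(U^n) for all f ∈ B^p(U^n) and there is C with ‖f∘φ‖_q ≤ C‖f‖_p for all such f) if and only if there exists a constant C such that Σ_{k,l=1}^n |∂φ_l/∂z_k(z)| · (1−|z_k|²)^q/(1−|φ_l(z)|²)^p ≤ C for all z ∈ U^n. -/

import Mathlib

open Metric Set Filter

noncomputable section

def polydisc (n : ℕ) : Set (Fin n → ℂ) := {z | ∀ j, ‖z j‖ < 1}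

def blochSum (n : ℕ) (p : ℝ) (f : (Fin n → ℂ) → ℂ) (z : Fin n → ℂ) : ℝ :=
  ∑ k : Fin n, ‖fderiv ℂ f z (Pi.single k 1)‖ * (1 - ‖z k‖ ^ 2) ^ p

def blochNorm (n : ℕ) (p : ℝ) (f : (Fin n → ℂ) → ℂ) : ℝ :=
  ‖f 0‖ + sSup (blochSum n p f '' polydisc n)

def MemBloch (n : ℕ) (p : ℝ) (f : (Fin n → ℂ) → ℂ) : Prop :=
  DifferentiableOn ℂ f (polydisc n) ∧ BddAbove (blochSum n p f '' polydisc n)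

def IsPolyFn (n : ℕ) (g : (Fin n → ℂ) → ℂ) : Prop :=
  ∃ P : MvPolynomial (Fin n) ℂ, ∀ z, g z = MvPolynomial.eval z P

def MemLittleBloch (n : ℕ) (p : ℝ) (f : (Fin n → ℂ) → ℂ) : Prop :=
  MemBloch n p f ∧ ∀ ε : ℝ, 0 < ε →
    ∃ g, IsPolyFn n g ∧ blochNorm n p (fun z => f z - g z) < ε

def MemLittleStarBloch (n : ℕ) (p : ℝ) (f : (Fin n → ℂ) → ℂ) : Prop :=
  MemBloch n p f ∧ ∀ z : ℕ → Fin n → ℂ, (∀ j, z j ∈ polydisc n) →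
    (∀ k, Tendsto (fun j => ‖z j k‖) atTop (nhds 1)) →
    Tendsto (fun j => blochSum n p f (z j)) atTop (nhds 0)

def HoloSelfMap (n : ℕ) (φ : (Fin n → ℂ) → Fin n → ℂ) : Prop :=
  DifferentiableOn ℂ φ (polydisc n) ∧ ∀ z ∈ polydisc n, φ z ∈ polydisc n

def compSum (n : ℕ) (p q : ℝ) (φ : (Fin n → ℂ) → Fin n → ℂ) (z : Fin n → ℂ) : ℝ :=
  ∑ k : Fin n, ∑ l : Fin n, ‖fderiv ℂ φ z (Pi.single k 1) l‖ *
    ((1 - ‖z k‖ ^ 2) ^ q / (1 - ‖φ z l‖ ^ 2) ^ p)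

/-!
Sufficiency is the chain rule: `∂_k (f ∘ φ) = ∑_l ∂_l f(φ) ∂_k φ_l`, and each
`|∂_l f(φ z)|` is at most the `p`-Bloch seminorm of `f` divided by `(1 - |φ_l z|²)^p`;
the value `f (φ 0)` is controlled by the mean value inequality on the closed polydisc
of radius `‖φ 0‖`.

Necessity tests `C_φ` on functions of a single coordinate `g (z_l)`, for which
`(g ∘ φ_l)` has Bloch sum `|g'(φ_l z)| ∑_k |∂_k φ_l(z)| (1 - |z_k|²)^q`. The coordinate
`z_l` itself bounds `∑_k |∂_k φ_l(z)| (1 - |z_k|²)^q`, which suffices where `|φ_l z| ≤ 1/2`;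
near the boundary one uses `g(w) = (1 - ā w)^(1 - p + i)` with `a = φ_l z`, whose
`p`-Bloch norm is bounded uniformly in `a` while `|g'(a)| ≍ |a| / (1 - |a|²)^p`.
-/

open scoped ComplexConjugate

theorem polydisc_eq_ball (n : ℕ) : polydisc n = ball (0 : Fin n → ℂ) 1 := by
  ext z
  simp only [mem_ball, dist_zero_right, pi_norm_lt_iff one_pos]
  rfl

theorem isOpen_polydisc (n : ℕ) : IsOpen (polydisc n) :=
  polydisc_eq_ball n ▸ isOpen_ball

theorem mem_polydisc_iff_norm_lt_one {n : ℕ} {z : Fin n → ℂ} : z ∈ polydisc n ↔ ‖z‖ < 1 := by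
  rw [polydisc_eq_ball, mem_ball_zero_iff]

theorem zero_mem_polydisc (n : ℕ) : (0 : Fin n → ℂ) ∈ polydisc n := fun j => by simp

theorem one_sub_norm_sq_pos {E : Type*} [SeminormedAddGroup E] {x : E} (hx : ‖x‖ < 1) :
    0 < 1 - ‖x‖ ^ 2 := by
  nlinarith [norm_nonneg x]

theorem rpow_one_sub_norm_sq_pos {E : Type*} [SeminormedAddGroup E] {x : E} (hx : ‖x‖ < 1)
    (p : ℝ) : 0 < (1 - ‖x‖ ^ 2) ^ p :=
  Real.rpow_pos_of_pos (one_sub_norm_sq_pos hx) p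

section PiLinearMap

variable {ι 𝕜 F : Type*} [Fintype ι] [DecidableEq ι] [NontriviallyNormedField 𝕜]
  [NormedAddCommGroup F] [NormedSpace 𝕜 F]

theorem ContinuousLinearMap.apply_eq_sum_smul_single (L : (ι → 𝕜) →L[𝕜] F) (v : ι → 𝕜) :
    L v = ∑ i, v i • L (Pi.single i 1) := by
  conv_lhs => rw [← Finset.univ_sum_single v, map_sum]
  refine Finset.sum_congr rfl fun i _ => ?_
  rw [← map_smul, ← Pi.single_smul', smul_eq_mul, mul_one]

theorem ContinuousLinearMap.opNorm_le_sum_norm_apply_single (L : (ι → 𝕜) →L[𝕜] F) :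
    ‖L‖ ≤ ∑ i, ‖L (Pi.single i 1)‖ := by
  refine L.opNorm_le_bound (Finset.sum_nonneg fun _ _ => norm_nonneg _) fun v => ?_
  calc ‖L v‖ ≤ ∑ i, ‖v i‖ * ‖L (Pi.single i 1)‖ := by
        rw [L.apply_eq_sum_smul_single]
        exact (norm_sum_le _ _).trans_eq (by simp only [norm_smul])
    _ ≤ ∑ i, ‖v‖ * ‖L (Pi.single i 1)‖ := by
        gcongr with i; exact norm_le_pi_norm v i
    _ = (∑ i, ‖L (Pi.single i 1)‖) * ‖v‖ := by rw [Finset.sum_mul]; simp only [mul_comm]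

end PiLinearMap

def blochSeminorm (n : ℕ) (p : ℝ) (f : (Fin n → ℂ) → ℂ) : ℝ :=
  sSup (blochSum n p f '' polydisc n)

section Bloch

variable {n : ℕ} {p : ℝ} {f : (Fin n → ℂ) → ℂ} {z : Fin n → ℂ}

theorem blochNorm_eq : blochNorm n p f = ‖f 0‖ + blochSeminorm n p f := rfl

theorem blochSeminorm_le_blochNorm : blochSeminorm n p f ≤ blochNorm n p f :=
  le_add_of_nonneg_left (norm_nonneg _)

theorem norm_fderiv_single_mul_le_blochSum (hz : z ∈ polydisc n) (l : Fin n) :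
    ‖fderiv ℂ f z (Pi.single l 1)‖ * (1 - ‖z l‖ ^ 2) ^ p ≤ blochSum n p f z :=
  Finset.single_le_sum (f := fun k => ‖fderiv ℂ f z (Pi.single k 1)‖ * (1 - ‖z k‖ ^ 2) ^ p)
    (fun k _ => mul_nonneg (norm_nonneg _) (rpow_one_sub_norm_sq_pos (hz k) p).le)
    (Finset.mem_univ l)

theorem blochSum_nonneg (hz : z ∈ polydisc n) : 0 ≤ blochSum n p f z :=
  Finset.sum_nonneg fun k _ => mul_nonneg (norm_nonneg _) (rpow_one_sub_norm_sq_pos (hz k) p).le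

theorem blochSeminorm_le {B : ℝ} (hB : ∀ z ∈ polydisc n, blochSum n p f z ≤ B) :
    blochSeminorm n p f ≤ B :=
  csSup_le ⟨_, 0, zero_mem_polydisc n, rfl⟩ (by rintro _ ⟨z, hz, rfl⟩; exact hB z hz)

theorem memBloch_of_blochSum_le {B : ℝ} (hf : DifferentiableOn ℂ f (polydisc n))
    (hB : ∀ z ∈ polydisc n, blochSum n p f z ≤ B) : MemBloch n p f :=
  ⟨hf, B, by rintro _ ⟨z, hz, rfl⟩; exact hB z hz⟩

namespace MemBloch

theorem differentiableAt (hf : MemBloch n p f) (hz : z ∈ polydisc n) : DifferentiableAt ℂ f z :=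
  hf.1.differentiableAt ((isOpen_polydisc n).mem_nhds hz)

theorem blochSum_le (hf : MemBloch n p f) (hz : z ∈ polydisc n) :
    blochSum n p f z ≤ blochSeminorm n p f :=
  le_csSup hf.2 ⟨z, hz, rfl⟩

theorem blochSeminorm_nonneg (hf : MemBloch n p f) : 0 ≤ blochSeminorm n p f :=
  (blochSum_nonneg (zero_mem_polydisc n)).trans (hf.blochSum_le (zero_mem_polydisc n))

theorem blochNorm_nonneg (hf : MemBloch n p f) : 0 ≤ blochNorm n p f :=
  add_nonneg (norm_nonneg _) hf.blochSeminorm_nonneg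

theorem norm_fderiv_single_le (hf : MemBloch n p f) (hz : z ∈ polydisc n) (l : Fin n) :
    ‖fderiv ℂ f z (Pi.single l 1)‖ ≤ blochSeminorm n p f / (1 - ‖z l‖ ^ 2) ^ p :=
  (le_div_iff₀ (rpow_one_sub_norm_sq_pos (hz l) p)).2
    ((norm_fderiv_single_mul_le_blochSum hz l).trans (hf.blochSum_le hz))

end MemBloch

end Bloch

section PointEvaluation

variable {n : ℕ} {p : ℝ} {f : (Fin n → ℂ) → ℂ}

theorem MemBloch.norm_fderiv_le (hp : 0 ≤ p) (hf : MemBloch n p f) {r : ℝ} (hr : r < 1)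
    {x : Fin n → ℂ} (hx : ‖x‖ ≤ r) :
    ‖fderiv ℂ f x‖ ≤ n / (1 - r ^ 2) ^ p * blochSeminorm n p f := by
  have hx₁ : x ∈ polydisc n := mem_polydisc_iff_norm_lt_one.2 (hx.trans_lt hr)
  have hr₀ : 0 ≤ r := (norm_nonneg x).trans hx
  have hpos : 0 < (1 - r ^ 2) ^ p := Real.rpow_pos_of_pos (by nlinarith) p
  calc ‖fderiv ℂ f x‖ ≤ ∑ l, ‖fderiv ℂ f x (Pi.single l 1)‖ :=
        (fderiv ℂ f x).opNorm_le_sum_norm_apply_single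
    _ ≤ ∑ _l : Fin n, blochSeminorm n p f / (1 - r ^ 2) ^ p := by
        refine Finset.sum_le_sum fun l _ => (hf.norm_fderiv_single_le hx₁ l).trans ?_
        refine div_le_div_of_nonneg_left hf.blochSeminorm_nonneg hpos
          (Real.rpow_le_rpow (by nlinarith) ?_ hp)
        have := (norm_le_pi_norm x l).trans hx
        nlinarith [norm_nonneg (x l)]
    _ = n / (1 - r ^ 2) ^ p * blochSeminorm n p f := by
        rw [Finset.sum_const, Finset.card_univ, Fintype.card_fin, nsmul_eq_mul]
        ring

theorem MemBloch.norm_apply_le (hp : 0 ≤ p) (hf : MemBloch n p f) {w : Fin n → ℂ}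
    (hw : w ∈ polydisc n) :
    ‖f w‖ ≤ ‖f 0‖ + n / (1 - ‖w‖ ^ 2) ^ p * blochSeminorm n p f := by
  have hw₁ : ‖w‖ < 1 := mem_polydisc_iff_norm_lt_one.1 hw
  set K := n / (1 - ‖w‖ ^ 2) ^ p * blochSeminorm n p f
  have hK : 0 ≤ K := mul_nonneg (div_nonneg n.cast_nonneg (rpow_one_sub_norm_sq_pos hw₁ p).le)
    hf.blochSeminorm_nonneg
  have hball : closedBall (0 : Fin n → ℂ) ‖w‖ ⊆ polydisc n :=
    polydisc_eq_ball n ▸ closedBall_subset_ball hw₁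
  have hmvt : ‖f w - f 0‖ ≤ K * ‖w - 0‖ :=
    (convex_closedBall 0 ‖w‖).norm_image_sub_le_of_norm_fderiv_le
      (fun x hx => hf.differentiableAt (hball hx))
      (fun x hx => hf.norm_fderiv_le hp hw₁ (mem_closedBall_zero_iff.1 hx))
      (mem_closedBall_self (norm_nonneg w)) (mem_closedBall_zero_iff.2 le_rfl)
  calc ‖f w‖ ≤ ‖f 0‖ + ‖f w - f 0‖ := norm_le_norm_add_norm_sub' _ _
    _ ≤ ‖f 0‖ + K := by
        rw [sub_zero] at hmvt
        nlinarith [norm_nonneg w]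

end PointEvaluation

section ChainRule

variable {n : ℕ} {p : ℝ} {z : Fin n → ℂ}

theorem norm_fderiv_comp_single_le {f : (Fin n → ℂ) → ℂ} {φ : (Fin n → ℂ) → Fin n → ℂ}
    (hf : DifferentiableAt ℂ f (φ z)) (hφ : DifferentiableAt ℂ φ z) (k : Fin n) :
    ‖fderiv ℂ (fun z => f (φ z)) z (Pi.single k 1)‖ ≤
      ∑ l, ‖fderiv ℂ φ z (Pi.single k 1) l‖ * ‖fderiv ℂ f (φ z) (Pi.single l 1)‖ := by
  rw [show (fun z => f (φ z)) = f ∘ φ from rfl, fderiv_comp z hf hφ,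
    ContinuousLinearMap.comp_apply, ContinuousLinearMap.apply_eq_sum_smul_single]
  exact (norm_sum_le _ _).trans_eq (by simp only [norm_smul])

theorem blochSum_comp_of_hasDerivAt {h : (Fin n → ℂ) → ℂ} {g : ℂ → ℂ} {g' : ℂ}
    (hh : DifferentiableAt ℂ h z) (hg : HasDerivAt g g' (h z)) :
    blochSum n p (fun z => g (h z)) z = ‖g'‖ * blochSum n p h z := by
  have hd : HasFDerivAt (fun z => g (h z)) (g' • fderiv ℂ h z) z :=
    hg.comp_hasFDerivAt z hh.hasFDerivAt
  rw [blochSum, blochSum, hd.fderiv, Finset.mul_sum]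
  simp only [smul_apply, norm_smul, mul_assoc]

theorem blochSum_apply (l : Fin n) :
    blochSum n p (fun z => z l) z = (1 - ‖z l‖ ^ 2) ^ p := by
  have hd : fderiv ℂ (fun z : Fin n → ℂ => z l) z = ContinuousLinearMap.proj l :=
    (ContinuousLinearMap.proj (R := ℂ) (φ := fun _ : Fin n => ℂ) l).hasFDerivAt.fderiv
  rw [blochSum, Finset.sum_eq_single l (fun k _ hk => by simp [hd, hk.symm]) (by simp)]
  simp [hd]

theorem memBloch_comp_apply {M : ℝ} {g g' : ℂ → ℂ} (l : Fin n)
    (hg : ∀ w : ℂ, ‖w‖ < 1 → HasDerivAt g (g' w) w)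
    (hM : ∀ w : ℂ, ‖w‖ < 1 → ‖g' w‖ * (1 - ‖w‖ ^ 2) ^ p ≤ M) :
    MemBloch n p (fun z => g (z l)) ∧ blochNorm n p (fun z => g (z l)) ≤ ‖g 0‖ + M := by
  have hsum : ∀ z ∈ polydisc n, blochSum n p (fun z => g (z l)) z ≤ M := fun z hz => by
    rw [blochSum_comp_of_hasDerivAt (differentiableAt_apply l z) (hg _ (hz l)), blochSum_apply]
    exact hM _ (hz l)
  refine ⟨memBloch_of_blochSum_le (fun z hz => ?_) hsum, ?_⟩
  · exact ((hg _ (hz l)).differentiableAt.comp z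
      (differentiableAt_apply l z)).differentiableWithinAt
  · exact add_le_add_right (blochSeminorm_le hsum) _

end ChainRule

namespace HoloSelfMap

variable {n : ℕ} {p q : ℝ} {φ : (Fin n → ℂ) → Fin n → ℂ} {f : (Fin n → ℂ) → ℂ}
  {z : Fin n → ℂ}

theorem differentiableAt (hφ : HoloSelfMap n φ) (hz : z ∈ polydisc n) :
    DifferentiableAt ℂ φ z :=
  hφ.1.differentiableAt ((isOpen_polydisc n).mem_nhds hz)

theorem compSum_nonneg (hφ : HoloSelfMap n φ) (hz : z ∈ polydisc n) :
    0 ≤ compSum n p q φ z :=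
  Finset.sum_nonneg fun k _ => Finset.sum_nonneg fun l _ =>
    mul_nonneg (norm_nonneg _) (div_nonneg (rpow_one_sub_norm_sq_pos (hz k) q).le
      (rpow_one_sub_norm_sq_pos (hφ.2 z hz l) p).le)

theorem blochSum_comp_le (hφ : HoloSelfMap n φ) (hf : MemBloch n p f) (hz : z ∈ polydisc n) :
    blochSum n q (fun z => f (φ z)) z ≤ blochSeminorm n p f * compSum n p q φ z := by
  have hφz := hφ.2 z hz
  set S := blochSeminorm n p f
  calc blochSum n q (fun z => f (φ z)) z
      ≤ ∑ k, ∑ l, ‖fderiv ℂ φ z (Pi.single k 1) l‖ * ‖fderiv ℂ f (φ z) (Pi.single l 1)‖ *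
          (1 - ‖z k‖ ^ 2) ^ q := by
        simp only [blochSum, ← Finset.sum_mul]
        gcongr with k
        · exact (rpow_one_sub_norm_sq_pos (hz k) q).le
        · exact norm_fderiv_comp_single_le (hf.differentiableAt hφz) (hφ.differentiableAt hz) k
    _ ≤ ∑ k, ∑ l, ‖fderiv ℂ φ z (Pi.single k 1) l‖ * (S / (1 - ‖φ z l‖ ^ 2) ^ p) *
          (1 - ‖z k‖ ^ 2) ^ q := by
        gcongr with k _ l
        · exact (rpow_one_sub_norm_sq_pos (hz k) q).le
        · exact hf.norm_fderiv_single_le hφz l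
    _ = S * compSum n p q φ z := by
        simp only [compSum, Finset.mul_sum]
        refine Finset.sum_congr rfl fun k _ => Finset.sum_congr rfl fun l _ => ?_
        ring

theorem memBloch_comp (hφ : HoloSelfMap n φ) {C : ℝ}
    (hC : ∀ z ∈ polydisc n, compSum n p q φ z ≤ C) (hf : MemBloch n p f) :
    MemBloch n q (fun z => f (φ z)) :=
  memBloch_of_blochSum_le (hf.1.comp hφ.1 hφ.2) fun z hz =>
    (hφ.blochSum_comp_le hf hz).trans
      (mul_le_mul_of_nonneg_left (hC z hz) hf.blochSeminorm_nonneg)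

theorem blochNorm_comp_le (hp : 0 ≤ p) (hφ : HoloSelfMap n φ) {C : ℝ}
    (hC : ∀ z ∈ polydisc n, compSum n p q φ z ≤ C) (hf : MemBloch n p f) :
    blochNorm n q (fun z => f (φ z)) ≤
      (1 + n / (1 - ‖φ 0‖ ^ 2) ^ p + C) * blochNorm n p f := by
  have hφ0 := hφ.2 0 (zero_mem_polydisc n)
  set S := blochSeminorm n p f
  set K : ℝ := n / (1 - ‖φ 0‖ ^ 2) ^ p
  have hS : 0 ≤ S := hf.blochSeminorm_nonneg
  have hK : 0 ≤ K := div_nonneg n.cast_nonneg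
    (rpow_one_sub_norm_sq_pos (mem_polydisc_iff_norm_lt_one.1 hφ0) p).le
  have hC₀ : 0 ≤ C :=
    (hφ.compSum_nonneg (zero_mem_polydisc n)).trans (hC 0 (zero_mem_polydisc n))
  have heval : ‖f (φ 0)‖ ≤ ‖f 0‖ + K * S := hf.norm_apply_le hp hφ0
  have hsemi : blochSeminorm n q (fun z => f (φ z)) ≤ S * C :=
    blochSeminorm_le fun z hz =>
      (hφ.blochSum_comp_le hf hz).trans (mul_le_mul_of_nonneg_left (hC z hz) hS)
  rw [blochNorm_eq, blochNorm_eq]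
  nlinarith [norm_nonneg (f 0), mul_nonneg hK (norm_nonneg (f 0)),
    mul_nonneg hC₀ (norm_nonneg (f 0))]

end HoloSelfMap

section TestFunction

-- The imaginary part keeps the exponent away from `0`: the usual `(1 - ā w)^(1 - p)` is
-- constant at `p = 1`.
def testExponent (p : ℝ) : ℂ := 1 - p + Complex.I

def testFn (p : ℝ) (a w : ℂ) : ℂ := (1 - conj a * w) ^ testExponent p

def testDeriv (p : ℝ) (a w : ℂ) : ℂ :=
  testExponent p * (1 - conj a * w) ^ (testExponent p - 1) * -conj a

variable {p : ℝ} {a w : ℂ}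

theorem testExponent_ne_zero : testExponent p ≠ 0 := fun h => by
  simpa [testExponent] using congrArg Complex.im h

theorem testExponent_sub_one_re : (testExponent p - 1).re = -p := by simp [testExponent]

theorem testExponent_sub_one_im : (testExponent p - 1).im = 1 := by simp [testExponent]

theorem testFn_zero : testFn p a 0 = 1 := by simp [testFn]

theorem re_one_sub_conj_mul_pos (ha : ‖a‖ ≤ 1) (hw : ‖w‖ < 1) : 0 < (1 - conj a * w).re := by
  have h : ‖conj a * w‖ < 1 := by
    rw [norm_mul, Complex.norm_conj]; nlinarith [norm_nonneg a, norm_nonneg w]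
  rw [Complex.sub_re, Complex.one_re]
  linarith [Complex.re_le_norm (conj a * w)]

theorem one_sub_conj_mul_ne_zero (ha : ‖a‖ ≤ 1) (hw : ‖w‖ < 1) : 1 - conj a * w ≠ 0 :=
  fun h => by simpa [h] using re_one_sub_conj_mul_pos ha hw

theorem hasDerivAt_testFn (ha : ‖a‖ ≤ 1) (hw : ‖w‖ < 1) :
    HasDerivAt (testFn p a) (testDeriv p a w) w := by
  have hu : HasDerivAt (fun w => 1 - conj a * w) (-conj a) w := by
    simpa using ((hasDerivAt_id w).const_mul (conj a)).const_sub 1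
  exact hu.cpow_const (Or.inl (re_one_sub_conj_mul_pos ha hw))

theorem norm_testDeriv (ha : ‖a‖ ≤ 1) (hw : ‖w‖ < 1) :
    ‖testDeriv p a w‖ = ‖testExponent p‖ * ‖a‖ *
      (‖1 - conj a * w‖ ^ (-p) / Real.exp (Complex.arg (1 - conj a * w))) := by
  rw [testDeriv, norm_mul, norm_mul, norm_neg, Complex.norm_conj,
    Complex.norm_cpow_of_ne_zero (one_sub_conj_mul_ne_zero ha hw), testExponent_sub_one_re,
    testExponent_sub_one_im, mul_one]
  ring

theorem norm_testDeriv_mul_le (hp : 0 ≤ p) (ha : ‖a‖ ≤ 1) (hw : ‖w‖ < 1) :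
    ‖testDeriv p a w‖ * (1 - ‖w‖ ^ 2) ^ p ≤ ‖testExponent p‖ * (2 ^ p * Real.exp Real.pi) := by
  set u := 1 - conj a * w
  have hu : 0 < ‖u‖ := norm_pos_iff.2 (one_sub_conj_mul_ne_zero ha hw)
  have hdist : 1 - ‖w‖ ^ 2 ≤ 2 * ‖u‖ := by
    have h₁ : ‖conj a * w‖ ≤ ‖w‖ := by
      rw [norm_mul, Complex.norm_conj]; nlinarith [norm_nonneg a, norm_nonneg w]
    have h₂ : 1 - ‖conj a * w‖ ≤ ‖u‖ := by simpa using norm_sub_norm_le (1 : ℂ) (conj a * w)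
    nlinarith [norm_nonneg w]
  have hpow : ‖u‖ ^ (-p) * (1 - ‖w‖ ^ 2) ^ p ≤ 2 ^ p := by
    rw [Real.rpow_neg hu.le, inv_mul_le_iff₀ (Real.rpow_pos_of_pos hu p),
      mul_comm, ← Real.mul_rpow zero_le_two hu.le]
    exact Real.rpow_le_rpow (one_sub_norm_sq_pos hw).le hdist hp
  have harg : (Real.exp (Complex.arg u))⁻¹ ≤ Real.exp Real.pi := by
    rw [← Real.exp_neg, Real.exp_le_exp]; linarith [Complex.neg_pi_lt_arg u]
  have hw₀ := (rpow_one_sub_norm_sq_pos hw p).le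
  rw [norm_testDeriv ha hw]
  calc ‖testExponent p‖ * ‖a‖ * (‖u‖ ^ (-p) / Real.exp (Complex.arg u)) * (1 - ‖w‖ ^ 2) ^ p
      = ‖testExponent p‖ * (‖a‖ * ((‖u‖ ^ (-p) * (1 - ‖w‖ ^ 2) ^ p) *
          (Real.exp (Complex.arg u))⁻¹)) := by ring
    _ ≤ ‖testExponent p‖ * (1 * (2 ^ p * Real.exp Real.pi)) := by gcongr
    _ = ‖testExponent p‖ * (2 ^ p * Real.exp Real.pi) := by ring

theorem norm_testDeriv_self (ha : ‖a‖ < 1) :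
    ‖testDeriv p a a‖ = ‖testExponent p‖ * ‖a‖ / (1 - ‖a‖ ^ 2) ^ p := by
  have hpos := one_sub_norm_sq_pos ha
  have hu : 1 - conj a * a = ((1 - ‖a‖ ^ 2 : ℝ) : ℂ) := by
    rw [mul_comm, Complex.mul_conj, Complex.normSq_eq_norm_sq]; push_cast; ring
  rw [norm_testDeriv ha.le ha, hu, Complex.arg_ofReal_of_nonneg hpos.le, Real.exp_zero, div_one,
    Complex.norm_real, Real.norm_of_nonneg hpos.le, Real.rpow_neg hpos.le, div_eq_mul_inv]

end TestFunction

theorem inv_rpow_one_sub_sq_le {t p : ℝ} (ht₀ : 0 ≤ t) (ht₁ : t < 1) (hp : 0 ≤ p) :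
    ((1 - t ^ 2) ^ p)⁻¹ ≤ 2 ^ p + 2 * t * ((1 - t ^ 2) ^ p)⁻¹ := by
  have hpos : 0 < 1 - t ^ 2 := by nlinarith
  have hinv : 0 ≤ ((1 - t ^ 2) ^ p)⁻¹ := inv_nonneg.2 (Real.rpow_nonneg hpos.le p)
  rcases le_or_gt t (1 / 2) with hsmall | hlarge
  · have h : ((1 - t ^ 2) ^ p)⁻¹ ≤ 2 ^ p := by
      rw [← Real.inv_rpow hpos.le]
      refine Real.rpow_le_rpow (inv_nonneg.2 hpos.le) ?_ hp
      rw [inv_le_comm₀ hpos two_pos]; nlinarith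
    nlinarith
  · nlinarith [Real.rpow_nonneg zero_le_two p]

namespace HoloSelfMap

variable {n : ℕ} {p q C : ℝ} {φ : (Fin n → ℂ) → Fin n → ℂ} {z : Fin n → ℂ}

theorem compSum_eq (hφ : HoloSelfMap n φ) (hz : z ∈ polydisc n) :
    compSum n p q φ z = ∑ l, blochSum n q (fun z => φ z l) z / (1 - ‖φ z l‖ ^ 2) ^ p := by
  rw [compSum, Finset.sum_comm]
  refine Finset.sum_congr rfl fun l _ => ?_
  rw [blochSum, Finset.sum_div, fderiv_apply (hφ.differentiableAt hz) l]
  refine Finset.sum_congr rfl fun k _ => ?_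
  rw [mul_div_assoc]
  rfl

theorem norm_deriv_mul_blochSum_apply_le (hφ : HoloSelfMap n φ)
    (hmem : ∀ f, MemBloch n p f → MemBloch n q (fun z => f (φ z))) (hC₀ : 0 ≤ C)
    (hC : ∀ f, MemBloch n p f → blochNorm n q (fun z => f (φ z)) ≤ C * blochNorm n p f)
    {g g' : ℂ → ℂ} {M : ℝ} (l : Fin n) (hg : ∀ w : ℂ, ‖w‖ < 1 → HasDerivAt g (g' w) w)
    (hM : ∀ w : ℂ, ‖w‖ < 1 → ‖g' w‖ * (1 - ‖w‖ ^ 2) ^ p ≤ M) (hz : z ∈ polydisc n) :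
    ‖g' (φ z l)‖ * blochSum n q (fun z => φ z l) z ≤ C * (‖g 0‖ + M) := by
  obtain ⟨hgB, hgN⟩ := memBloch_comp_apply l hg hM
  have hφl : DifferentiableAt ℂ (fun z => φ z l) z :=
    differentiableAt_pi.1 (hφ.differentiableAt hz) l
  calc ‖g' (φ z l)‖ * blochSum n q (fun z => φ z l) z
      = blochSum n q (fun z => g (φ z l)) z :=
        (blochSum_comp_of_hasDerivAt hφl (hg _ (hφ.2 z hz l))).symm
    _ ≤ blochNorm n q (fun z => g (φ z l)) :=
        ((hmem _ hgB).blochSum_le hz).trans blochSeminorm_le_blochNorm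
    _ ≤ C * blochNorm n p (fun z => g (z l)) := hC _ hgB
    _ ≤ C * (‖g 0‖ + M) := mul_le_mul_of_nonneg_left hgN hC₀

theorem blochSum_apply_div_le_of_comp_bounded (hp : 0 ≤ p) (hφ : HoloSelfMap n φ)
    (hmem : ∀ f, MemBloch n p f → MemBloch n q (fun z => f (φ z))) (hC₀ : 0 ≤ C)
    (hC : ∀ f, MemBloch n p f → blochNorm n q (fun z => f (φ z)) ≤ C * blochNorm n p f)
    (l : Fin n) (hz : z ∈ polydisc n) :
    blochSum n q (fun z => φ z l) z / (1 - ‖φ z l‖ ^ 2) ^ p ≤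
      2 ^ p * C + 2 * (C * (1 + ‖testExponent p‖ * (2 ^ p * Real.exp Real.pi)) /
        ‖testExponent p‖) := by
  set M := ‖testExponent p‖ * (2 ^ p * Real.exp Real.pi)
  set a := φ z l
  set A := blochSum n q (fun z => φ z l) z
  have ha : ‖a‖ < 1 := hφ.2 z hz l
  have hA₀ : 0 ≤ A := blochSum_nonneg hz
  have hA : A ≤ C := by
    have hM (w : ℂ) (hw : ‖w‖ < 1) : ‖(1 : ℂ)‖ * (1 - ‖w‖ ^ 2) ^ p ≤ 1 := by
      rw [norm_one, one_mul]
      exact Real.rpow_le_one (one_sub_norm_sq_pos hw).le (by nlinarith [norm_nonneg w]) hp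
    simpa using hφ.norm_deriv_mul_blochSum_apply_le hmem hC₀ hC l
      (fun w _ => hasDerivAt_id w) hM hz
  have hT : ‖a‖ / (1 - ‖a‖ ^ 2) ^ p * A ≤ C * (1 + M) / ‖testExponent p‖ := by
    have := hφ.norm_deriv_mul_blochSum_apply_le hmem hC₀ hC l
      (fun w hw => hasDerivAt_testFn ha.le hw) (fun w hw => norm_testDeriv_mul_le hp ha.le hw) hz
    rw [norm_testDeriv_self ha, testFn_zero, norm_one] at this
    rw [le_div_iff₀ (norm_pos_iff.2 testExponent_ne_zero)]
    calc ‖a‖ / (1 - ‖a‖ ^ 2) ^ p * A * ‖testExponent p‖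
        = ‖testExponent p‖ * ‖a‖ / (1 - ‖a‖ ^ 2) ^ p * A := by ring
      _ ≤ C * (1 + M) := this
  calc A / (1 - ‖a‖ ^ 2) ^ p = A * ((1 - ‖a‖ ^ 2) ^ p)⁻¹ := div_eq_mul_inv _ _
    _ ≤ A * (2 ^ p + 2 * ‖a‖ * ((1 - ‖a‖ ^ 2) ^ p)⁻¹) :=
        mul_le_mul_of_nonneg_left (inv_rpow_one_sub_sq_le (norm_nonneg a) ha hp) hA₀
    _ = 2 ^ p * A + 2 * (‖a‖ / (1 - ‖a‖ ^ 2) ^ p * A) := by ring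
    _ ≤ 2 ^ p * C + 2 * (C * (1 + M) / ‖testExponent p‖) := by gcongr

theorem exists_compSum_le_of_comp_bounded (hp : 0 ≤ p) (hφ : HoloSelfMap n φ)
    (hmem : ∀ f, MemBloch n p f → MemBloch n q (fun z => f (φ z)))
    (hC : ∀ f, MemBloch n p f → blochNorm n q (fun z => f (φ z)) ≤ C * blochNorm n p f) :
    ∃ B : ℝ, ∀ z ∈ polydisc n, compSum n p q φ z ≤ B := by
  have hC' (f) (hf : MemBloch n p f) :
      blochNorm n q (fun z => f (φ z)) ≤ max C 0 * blochNorm n p f :=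
    (hC f hf).trans (mul_le_mul_of_nonneg_right (le_max_left C 0) hf.blochNorm_nonneg)
  refine ⟨n * (2 ^ p * max C 0 + 2 * (max C 0 * (1 + ‖testExponent p‖ * (2 ^ p *
      Real.exp Real.pi)) / ‖testExponent p‖)), fun z hz => ?_⟩
  rw [hφ.compSum_eq hz]
  refine (Finset.sum_le_sum fun l _ =>
    hφ.blochSum_apply_div_le_of_comp_bounded hp hmem (le_max_right C 0) hC' l hz).trans_eq ?_
  rw [Finset.sum_const, Finset.card_univ, Fintype.card_fin, nsmul_eq_mul]

end HoloSelfMap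

theorem comp_bounded_iff_general (n : ℕ) (p q : ℝ) (hp : 0 < p)
    (φ : (Fin n → ℂ) → Fin n → ℂ) (hφ : HoloSelfMap n φ) :
    ((∀ f, MemBloch n p f → MemBloch n q (fun z => f (φ z))) ∧
      ∃ C : ℝ, ∀ f, MemBloch n p f →
        blochNorm n q (fun z => f (φ z)) ≤ C * blochNorm n p f) ↔
    ∃ C : ℝ, ∀ z ∈ polydisc n, compSum n p q φ z ≤ C := by
  constructor
  · rintro ⟨hmem, C, hC⟩
    exact hφ.exists_compSum_le_of_comp_bounded hp.le hmem hC
  · rintro ⟨C, hC⟩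
    exact ⟨fun f hf => hφ.memBloch_comp hC hf, _, fun f hf => hφ.blochNorm_comp_le hp.le hC hf⟩

/-- Lemma 3: boundedness of the composition operator C_φ : B^p(U^n) → B^q(U^n). -/
theorem comp_bounded_iff (n : ℕ) (p q : ℝ) (hp : 0 < p) (hq : 0 < q)
    (φ : (Fin n → ℂ) → Fin n → ℂ) (hφ : HoloSelfMap n φ) :
    ((∀ f, MemBloch n p f → MemBloch n q (fun z => f (φ z))) ∧
      ∃ C : ℝ, ∀ f, MemBloch n p f →
        blochNorm n q (fun z => f (φ z)) ≤ C * blochNorm n p f) ↔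
    ∃ C : ℝ, ∀ z ∈ polydisc n, compSum n p q φ z ≤ C :=
  comp_bounded_iff_general n p q hp φ hφ
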